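/- Let M ≥ 2 be an integer and define H_M(z1, …, zM) = (∏_{j=1}^M (1 − zj)) · (3 e^{∑_{j=1}^M zj} + 1). Then H_M(z1, …, zM) ≥ 4 for all (z1, …, zM) ∈ [−3, 0]^M. -/

import Mathlib

/-! The product `∏ (1 - zⱼ)` is at least `1 - s` with `s = ∑ zⱼ ≤ 0` (Weierstrass product
inequality), so everything reduces to the one-variable bound `(1 - s)(3eˢ + 1) ≥ 4` for `s ≤ 0`.
With `t = -s`, multiplying by `eᵗ` turns it into `(3 - t)eᵗ ≤ 3(1 + t)`, whose two sides agree
at `t = 0` and whose difference has derivative `3 - (2 - t)eᵗ ≥ 3 - e > 0`. -/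

open Finset Real

theorem one_add_sum_le_prod_one_add {ι R : Type*} [CommSemiring R] [PartialOrder R]
    [IsOrderedRing R] (s : Finset ι) {a : ι → R} (ha : ∀ i ∈ s, 0 ≤ a i) :
    1 + ∑ i ∈ s, a i ≤ ∏ i ∈ s, (1 + a i) := by
  induction s using Finset.cons_induction with
  | empty => simp
  | cons x t _ ih =>
    rw [sum_cons, prod_cons]
    have hax : 0 ≤ a x := ha x (mem_cons_self x t)
    have ht : ∀ i ∈ t, 0 ≤ a i := fun i hi => ha i (mem_cons_of_mem hi)
    calc 1 + (a x + ∑ i ∈ t, a i)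
        ≤ 1 + (a x + ∑ i ∈ t, a i) + a x * ∑ i ∈ t, a i :=
          le_add_of_nonneg_right (mul_nonneg hax (sum_nonneg ht))
      _ = (1 + a x) * (1 + ∑ i ∈ t, a i) := by ring
      _ ≤ (1 + a x) * ∏ i ∈ t, (1 + a i) :=
          mul_le_mul_of_nonneg_left (ih ht) (add_nonneg zero_le_one hax)

theorem one_sub_sum_le_prod_one_sub {ι R : Type*} [CommRing R] [PartialOrder R]
    [IsOrderedRing R] (s : Finset ι) {z : ι → R} (hz : ∀ i ∈ s, z i ≤ 0) :
    1 - ∑ i ∈ s, z i ≤ ∏ i ∈ s, (1 - z i) := by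
  simpa only [sub_eq_add_neg, sum_neg_distrib] using
    one_add_sum_le_prod_one_add s (a := fun i => -z i) fun i hi => neg_nonneg.2 (hz i hi)

theorem two_sub_mul_exp_le_exp_one (x : ℝ) : (2 - x) * exp x ≤ exp 1 := by
  calc (2 - x) * exp x ≤ exp (1 - x) * exp x := by
        gcongr
        linarith [add_one_le_exp (1 - x)]
    _ = exp 1 := by rw [← exp_add, sub_add_cancel]

theorem three_sub_mul_exp_le {t : ℝ} (ht : 0 ≤ t) : (3 - t) * exp t ≤ 3 * (1 + t) := by
  let f : ℝ → ℝ := fun x => 3 * (1 + x) - (3 - x) * exp x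
  have hf : ∀ x, HasDerivAt f (3 - (2 - x) * exp x) x := fun x => by
    refine ((((hasDerivAt_id' x).const_add 1).const_mul 3).sub
      (((hasDerivAt_id' x).const_sub 3).mul (hasDerivAt_exp x))).congr_deriv ?_
    ring
  have hf_mono : Monotone f := monotone_of_deriv_nonneg (fun x => (hf x).differentiableAt)
    fun x => by
      rw [(hf x).deriv]
      linarith [two_sub_mul_exp_le_exp_one x, exp_one_lt_d9]
  have := hf_mono ht
  simp only [f, exp_zero] at this
  linarith

theorem four_le_one_sub_mul_three_mul_exp_add_one {s : ℝ} (hs : s ≤ 0) :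
    4 ≤ (1 - s) * (3 * exp s + 1) := by
  have key := mul_le_mul_of_nonneg_right (three_sub_mul_exp_le (neg_nonneg.2 hs))
    (exp_pos s).le
  rw [mul_assoc, ← exp_add, neg_add_cancel, exp_zero] at key
  nlinarith [exp_pos s]

open Finset in
theorem H_M_ge_four_FIE_general (M : ℕ) (z : Fin M → ℝ)
    (hz : ∀ j, z j ∈ Set.Icc (-3 : ℝ) 0) :
    4 ≤ (∏ j, (1 - z j)) * (3 * Real.exp (∑ j, z j) + 1) := by
  have hs : ∑ j, z j ≤ 0 := sum_nonpos fun j _ => (hz j).2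
  calc (4 : ℝ) ≤ (1 - ∑ j, z j) * (3 * exp (∑ j, z j) + 1) :=
        four_le_one_sub_mul_three_mul_exp_add_one hs
    _ ≤ (∏ j, (1 - z j)) * (3 * exp (∑ j, z j) + 1) := by
        gcongr
        exact one_sub_sum_le_prod_one_sub univ fun j _ => (hz j).2

open Finset in
/-- Lower bound `H_M ≥ 4` on `[-3,0]^M` for
`H_M(z) = (∏ (1 - zj)) (3 e^{∑ zj} + 1)`. -/
theorem H_M_ge_four_FIE (M : ℕ) (hM : 2 ≤ M) (z : Fin M → ℝ)
    (hz : ∀ j, z j ∈ Set.Icc (-3 : ℝ) 0) :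
    4 ≤ (∏ j, (1 - z j)) * (3 * Real.exp (∑ j, z j) + 1) :=
  H_M_ge_four_FIE_general M z hz
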